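/- arXiv:2011.05472 — 2 statements merged into one kernel-verified Lean document; each statement's English description precedes it below -/
import Mathlib

section
/- A finite multigraph G is a cactus if and only if for every pair of distinct vertices v, w of G the edge connectivity satisfies λ(v, w) = 2. -/
set_option autoImplicit false

/-! ## Multigraphs -/

/-- A multigraph: a vertex type `V`, an edge type `E`, and an assignment to each edge of
its unordered pair of endpoints.  Loops and parallel edges are allowed. -/
structure Multigraph (V E : Type) where
  ends : E → Sym2 V

namespace Multigraph

variable {V E : Type}

/-- `G.ReachAvoid F u v` : `v` can be reached from `u` by a walk using no edge of `F`. -/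
inductive ReachAvoid (G : Multigraph V E) (F : Set E) : V → V → Prop
  | refl (v : V) : ReachAvoid G F v v
  | tail {u v w : V} (e : E) (he : e ∉ F) (hvw : G.ends e = s(v, w))
      (h : ReachAvoid G F u v) : ReachAvoid G F u w

/-- A multigraph is connected if any two vertices are joined by a walk. -/
def Connected (G : Multigraph V E) : Prop := ∀ u v : V, G.ReachAvoid ∅ u v

/-- `F` is a set of edges whose deletion disconnects `v` from `w`. -/
def IsEdgeCut (G : Multigraph V E) (v w : V) (F : Set E) : Prop := ¬ G.ReachAvoid F v w

/-- Edge connectivity `λ(v, w)`: the minimum number of edges whose deletion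
disconnects `v` from `w`. -/
noncomputable def edgeConn (G : Multigraph V E) (v w : V) : ℕ :=
  sInf {k : ℕ | ∃ F : Finset E, F.card = k ∧ G.IsEdgeCut v w ↑F}

/-- Walks in a multigraph, recorded together with the edges they traverse. -/
inductive Walk (G : Multigraph V E) : V → V → Type
  | nil (v : V) : Walk G v v
  | cons {u v w : V} (e : E) (huv : G.ends e = s(u, v)) (p : Walk G v w) : Walk G u w

namespace Walk

variable {G : Multigraph V E}

/-- The list of edges traversed by a walk. -/
def edges : ∀ {u v : V}, G.Walk u v → List E
  | _, _, .nil _ => []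
  | _, _, .cons e _ p => e :: edges p

/-- The list of vertices visited by a walk (including both endpoints). -/
def verts : ∀ {u v : V}, G.Walk u v → List V
  | _, v, .nil _ => [v]
  | u, _, .cons _ _ p => u :: verts p

/-- A walk is a path if it visits no vertex twice. -/
def IsPath {u v : V} (p : G.Walk u v) : Prop := p.verts.Nodup

end Walk

/-- `S` is the edge set of a simple cycle of `G`: a nonempty closed walk with no repeated
edges and no repeated vertices (other than the final return to the starting point).
A loop is a simple cycle of length one. -/
def IsSimpleCycleOn [DecidableEq E] (G : Multigraph V E) (S : Finset E) : Prop :=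
  ∃ (v : V) (p : G.Walk v v),
    p.edges ≠ [] ∧ p.edges.Nodup ∧ p.verts.dropLast.Nodup ∧ p.edges.toFinset = S

/-- A cactus: a connected multigraph in which every edge lies on exactly one simple cycle
(simple cycles being identified with their edge sets). -/
def IsCactus [DecidableEq E] (G : Multigraph V E) : Prop :=
  G.Connected ∧ ∀ e : E, ∃! S : Finset E, G.IsSimpleCycleOn S ∧ e ∈ S

/-- Two-edge-connected: connected, and still connected after deleting any single edge. -/
def TwoEdgeConnected (G : Multigraph V E) : Prop :=
  G.Connected ∧ ∀ (e : E) (u v : V), G.ReachAvoid {e} u v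

/-- The quotient multigraph by a partition (setoid) of the vertices: the vertices are the
blocks, and each edge joins the blocks of its original endpoints. -/
def quot (G : Multigraph V E) (σ : Setoid V) : Multigraph (Quotient σ) E :=
  ⟨fun e => (G.ends e).map (Quotient.mk σ)⟩

/-- Degree of a vertex: the number of edge-incidences at it (loops count twice). -/
def degree [DecidableEq V] [Fintype E] (G : Multigraph V E) (v : V) : ℕ :=
  ∑ e : E,
    Sym2.lift
      ⟨fun a b => (if a = v then 1 else 0) + (if b = v then 1 else 0),
        fun _ _ => add_comm _ _⟩ (G.ends e)

/-- A leaf is a vertex of degree one. -/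
def IsLeaf [DecidableEq V] [Fintype E] (G : Multigraph V E) (v : V) : Prop :=
  G.degree v = 1

/-- A tree: a connected multigraph with no simple cycles. -/
def IsTree [DecidableEq E] (G : Multigraph V E) : Prop :=
  G.Connected ∧ ∀ S : Finset E, ¬ G.IsSimpleCycleOn S

end Multigraph

/-- An embedding of the multigraph `H` into `G`, realizing `H` as a subgraph of `G`. -/
structure Multigraph.Embedding {W F V E : Type} (H : Multigraph W F) (G : Multigraph V E) where
  vmap : W → V
  emap : F → E
  vmap_inj : Function.Injective vmap
  emap_inj : Function.Injective emap
  ends_map : ∀ f : F, G.ends (emap f) = (H.ends f).map vmap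

/-! ## Multidigraphs -/

/-- A multidigraph: vertex type `V`, edge type `E`, and source and target maps. -/
structure Multidigraph (V E : Type) where
  src : E → V
  tgt : E → V

namespace Multidigraph

variable {V E : Type}

/-- The underlying multigraph of a multidigraph. -/
def toMultigraph (D : Multidigraph V E) : Multigraph V E :=
  ⟨fun e => s(D.src e, D.tgt e)⟩

/-- Directed walks in a multidigraph. -/
inductive DiWalk (D : Multidigraph V E) : V → V → Type
  | nil (v : V) : DiWalk D v v
  | cons {u v w : V} (e : E) (hs : D.src e = u) (ht : D.tgt e = v)
      (p : DiWalk D v w) : DiWalk D u w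

namespace DiWalk

variable {D : Multidigraph V E}

/-- The list of edges traversed by a directed walk. -/
def edges : ∀ {u v : V}, D.DiWalk u v → List E
  | _, _, .nil _ => []
  | _, _, .cons e _ _ p => e :: edges p

/-- The list of vertices visited by a directed walk. -/
def verts : ∀ {u v : V}, D.DiWalk u v → List V
  | _, v, .nil _ => [v]
  | u, _, .cons _ _ _ p => u :: verts p

end DiWalk

/-- `S` is the edge set of a simple directed cycle of `D`. -/
def IsDiCycleOn [DecidableEq E] (D : Multidigraph V E) (S : Finset E) : Prop :=
  ∃ (v : V) (p : D.DiWalk v v),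
    p.edges ≠ [] ∧ p.edges.Nodup ∧ p.verts.dropLast.Nodup ∧ p.edges.toFinset = S

/-- An oriented cactus: the underlying multigraph is a cactus and each of its simple
cycles (pads) is a directed cycle. -/
def IsOrientedCactus [DecidableEq E] (D : Multidigraph V E) : Prop :=
  D.toMultigraph.IsCactus ∧
    ∀ S : Finset E, D.toMultigraph.IsSimpleCycleOn S → D.IsDiCycleOn S

/-- The quotient multidigraph by a partition (setoid) of the vertices. -/
def quot (D : Multidigraph V E) (σ : Setoid V) : Multidigraph (Quotient σ) E where
  src := fun e => Quotient.mk σ (D.src e)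
  tgt := fun e => Quotient.mk σ (D.tgt e)

/-- Indegree of a vertex: the number of edges with target `v`. -/
def indeg [DecidableEq V] [Fintype E] (D : Multidigraph V E) (v : V) : ℕ :=
  (Finset.univ.filter fun e => D.tgt e = v).card

/-- Outdegree of a vertex: the number of edges with source `v`. -/
def outdeg [DecidableEq V] [Fintype E] (D : Multidigraph V E) (v : V) : ℕ :=
  (Finset.univ.filter fun e => D.src e = v).card

end Multidigraph

/-- An embedding of the multidigraph `H` into `G`, realizing `H` as a subgraph of `G`. -/
structure Multidigraph.Embedding {W F V E : Type}
    (H : Multidigraph W F) (G : Multidigraph V E) where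
  vmap : W → V
  emap : F → E
  vmap_inj : Function.Injective vmap
  emap_inj : Function.Injective emap
  src_map : ∀ f : F, G.src (emap f) = vmap (H.src f)
  tgt_map : ∀ f : F, G.tgt (emap f) = vmap (H.tgt f)

/-! ## Cycle graphs and non-crossing partitions -/

/-- The cycle graph of length `n`: vertices `Fin n`, edges `Fin n`, edge `i` joining
`v i` and `v (i+1)` (indices mod `n`). -/
def cycleGraph (n : ℕ) [NeZero n] : Multigraph (Fin n) (Fin n) :=
  ⟨fun i => s(i, i + 1)⟩

/-- The cycle graph of length `n` in which each edge carries an orientation: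
edge `i` is oriented counterclockwise (from `v i` to `v (i+1)`) if `orient i = true`,
and clockwise otherwise. -/
def cycleDigraph (n : ℕ) [NeZero n] (orient : Fin n → Bool) : Multidigraph (Fin n) (Fin n) where
  src := fun i => if orient i then i else i + 1
  tgt := fun i => if orient i then i + 1 else i

/-- A relation (e.g. a partition) on `Fin m` is non-crossing if there are no indices
`i₁ < i₂ < i₃ < i₄` with `i₁, i₃` in one block and `i₂, i₄` in a different block. -/
def NonCrossingRel {m : ℕ} (r : Fin m → Fin m → Prop) : Prop :=
  ¬ ∃ i₁ i₂ i₃ i₄ : Fin m, i₁ < i₂ ∧ i₂ < i₃ ∧ i₃ < i₄ ∧ r i₁ i₃ ∧ r i₂ i₄ ∧ ¬ r i₁ i₂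

/-- The union of a partition `σ` of the vertices `v₁, …, vₙ` (at the even positions) and
a partition `κ` of the edges `e₁, …, eₙ` (at the odd positions) of a cycle, as a relation
on the `2n` interlaced points `v₁, e₁, v₂, e₂, …, vₙ, eₙ`. -/
def interRel {n : ℕ} (σ κ : Setoid (Fin n)) (x y : Fin (2 * n)) : Prop :=
  (x.val % 2 = 0 ∧ y.val % 2 = 0 ∧
    σ.r ⟨x.val / 2, by have := x.isLt; omega⟩ ⟨y.val / 2, by have := y.isLt; omega⟩) ∨
  (x.val % 2 = 1 ∧ y.val % 2 = 1 ∧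
    κ.r ⟨x.val / 2, by have := x.isLt; omega⟩ ⟨y.val / 2, by have := y.isLt; omega⟩)

/-- `κ` is the Kreweras complement of `σ`: the largest partition of the edges such that
the union `σ ∪ κ` is non-crossing with respect to the interlaced (cyclic) order. -/
def IsKrewerasComplement {n : ℕ} (σ κ : Setoid (Fin n)) : Prop :=
  NonCrossingRel (interRel σ κ) ∧
    ∀ κ' : Setoid (Fin n), NonCrossingRel (interRel σ κ') → κ' ≤ κ

open Classical in
/-- The block of the partition `κ` containing `i`, as a finite set. -/
noncomputable def setoidClass {n : ℕ} (κ : Setoid (Fin n)) (i : Fin n) : Finset (Fin n) :=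
  Finset.univ.filter fun j => κ.r i j

open Fin.NatCast in
/-- `j` is the next element of `B` encountered strictly after `i` in the cyclic order of
`Fin n` (if `B = {i}` then `j = i` itself, one full turn later). -/
def CyclicNextIn {n : ℕ} [NeZero n] (B : Finset (Fin n)) (i j : Fin n) : Prop :=
  i ∈ B ∧ j ∈ B ∧ ∃ d : ℕ, 0 < d ∧ d ≤ n ∧ j = i + (d : Fin n) ∧
    ∀ d' : ℕ, 0 < d' → d' < d → i + (d' : Fin n) ∉ B

/-! ## Wedges of two (di)graphs at their roots -/

/-- The canonical map from the vertices of `t'` into the wedge vertex type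
`V ⊕ {x : V' // x ≠ ρ'}`, sending the root `ρ'` to (the image of) `ρ`. -/
def wedgeJ {V V' : Type} [DecidableEq V'] (ρ : V) (ρ' : V') :
    V' → V ⊕ {x : V' // x ≠ ρ'} :=
  fun x => if h : x = ρ' then Sum.inl ρ else Sum.inr ⟨x, h⟩

/-- The wedge of two multigraphs `t`, `t'` obtained by identifying `ρ ∈ t` with `ρ' ∈ t'`. -/
def Multigraph.wedge {V E V' E' : Type} [DecidableEq V']
    (t : Multigraph V E) (t' : Multigraph V' E') (ρ : V) (ρ' : V') :
    Multigraph (V ⊕ {x : V' // x ≠ ρ'}) (E ⊕ E') :=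
  ⟨fun e =>
    match e with
    | Sum.inl e => (t.ends e).map Sum.inl
    | Sum.inr e => (t'.ends e).map (wedgeJ ρ ρ')⟩

/-- The wedge of two multidigraphs `t`, `t'` obtained by identifying `ρ ∈ t` with `ρ' ∈ t'`. -/
def Multidigraph.wedge {V E V' E' : Type} [DecidableEq V']
    (t : Multidigraph V E) (t' : Multidigraph V' E') (ρ : V) (ρ' : V') :
    Multidigraph (V ⊕ {x : V' // x ≠ ρ'}) (E ⊕ E') where
  src := fun e =>
    match e with
    | Sum.inl e => Sum.inl (t.src e)
    | Sum.inr e => wedgeJ ρ ρ' (t'.src e)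
  tgt := fun e =>
    match e with
    | Sum.inl e => Sum.inl (t.tgt e)
    | Sum.inr e => wedgeJ ρ ρ' (t'.tgt e)

/-! ## Flowers (a cycle with graphs attached) and stars (trees wedged at a common root) -/

/-- The canonical map from the vertices of the `i`-th attached graph into the flower,
sending the basepoint `b i` to the cycle vertex `i`. -/
def flowerJ {n : ℕ} {W : Fin n → Type} [∀ i, DecidableEq (W i)]
    (b : ∀ i, W i) (i : Fin n) :
    W i → Fin n ⊕ (Σ i, {x : W i // x ≠ b i}) :=
  fun x => if h : x = b i then Sum.inl i else Sum.inr ⟨i, x, h⟩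

/-- The flower: a cycle of length `n` with the multigraph `d i` attached at the cycle
vertex `i` via its basepoint `b i`; the attached graphs are disjoint except through the
cycle, and `d i` meets the cycle exactly in the vertex `i`. -/
def flowerGraph {n : ℕ} [NeZero n] {W F : Fin n → Type} [∀ i, DecidableEq (W i)]
    (d : ∀ i, Multigraph (W i) (F i)) (b : ∀ i, W i) :
    Multigraph (Fin n ⊕ (Σ i, {x : W i // x ≠ b i})) (Fin n ⊕ (Σ i, F i)) :=
  ⟨fun e =>
    match e with
    | Sum.inl k => s(Sum.inl k, Sum.inl (k + 1))
    | Sum.inr ⟨i, f⟩ => ((d i).ends f).map (flowerJ b i)⟩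

/-- The canonical map from the vertices of the `i`-th tree into the star, sending the
root `r i` to the common amalgamated root. -/
def starJ {n : ℕ} {W : Fin n → Type} [∀ i, DecidableEq (W i)]
    (r : ∀ i, W i) (i : Fin n) :
    W i → Unit ⊕ (Σ i, {x : W i // x ≠ r i}) :=
  fun x => if h : x = r i then Sum.inl () else Sum.inr ⟨i, x, h⟩

/-- The star: the disjoint union of the multigraphs `t i` with all the roots `r i`
identified to a single vertex. -/
def starGraph {n : ℕ} {W F : Fin n → Type} [∀ i, DecidableEq (W i)]
    (t : ∀ i, Multigraph (W i) (F i)) (r : ∀ i, W i) :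
    Multigraph (Unit ⊕ (Σ i, {x : W i // x ≠ r i})) (Σ i, F i) :=
  ⟨fun e => ((t e.1).ends e.2).map (starJ r e.1)⟩

/-! ## Graphs of matrices -/

/-- The partition of `V` identifying the input `vin` with the output `vout` (and nothing
else). -/
def rootSetoid {V : Type} (vin vout : V) : Setoid V where
  r a b := a = b ∨ ((a = vin ∨ a = vout) ∧ (b = vin ∨ b = vout))
  iseqv := by
    constructor
    · intro x; exact Or.inl rfl
    · rintro x y (rfl | ⟨hx, hy⟩)
      · exact Or.inl rfl
      · exact Or.inr ⟨hy, hx⟩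
    · rintro x y z (rfl | ⟨hx, hy⟩) (rfl | ⟨hy', hz⟩)
      · exact Or.inl rfl
      · exact Or.inr ⟨hy', hz⟩
      · exact Or.inr ⟨hx, hy⟩
      · exact Or.inr ⟨hx, hz⟩

/-- The graph of matrices `Z_g(A₁, …, A_K)` associated to a bi-rooted multidigraph `g`
with input `vin`, output `vout` and edge ordering `o`. -/
noncomputable def graphOfMatrices {V E : Type} [Fintype V] [Fintype E] [DecidableEq V] {K N : ℕ}
    (g : Multidigraph V E) (vin vout : V) (o : E ≃ Fin K)
    (A : Fin K → Matrix (Fin N) (Fin N) ℂ) : Matrix (Fin N) (Fin N) ℂ :=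
  Matrix.of fun i j =>
    ∑ φ : V → Fin N,
      if φ vout = i ∧ φ vin = j then ∏ e : E, A (o e) (φ (g.tgt e)) (φ (g.src e)) else 0

/-! ## Set partitions as finite set systems -/

/-- `P` is a partition of the (finite) type `V`: its blocks are nonempty and every
element of `V` lies in exactly one block. -/
def IsPartitionOf (V : Type) [DecidableEq V] (P : Finset (Finset V)) : Prop :=
  (∀ B ∈ P, B.Nonempty) ∧ ∀ v : V, ∃! B, B ∈ P ∧ v ∈ B

/-- The block of the partition `P` containing `v`. -/
def blockOf {V : Type} [DecidableEq V] (P : Finset (Finset V)) (hP : IsPartitionOf V P)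
    (v : V) : {B : Finset V // B ∈ P} :=
  ⟨Finset.choose (fun B => v ∈ B) P (hP.2 v),
    Finset.choose_mem (fun B => v ∈ B) P (hP.2 v)⟩

/-! In a cactus, the first edge `e` of a path from `v` to `w` lies on a unique cycle `C`;
deleting `e` and the other edge of `C` at `v` separates `v` from `w`, since otherwise a path back
to `v` would close a second cycle through `e`. Conversely, if every `λ(v, w)` equals `2`, each
edge closes a cycle with a path avoiding it, and two distinct cycles through `e` would yield an
ear: a path outside one cycle `C` between two of its vertices `u ≠ v`, giving three edge-disjoint
`u`–`v` routes that no two edges can cut. -/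

namespace Multigraph

variable {V E : Type} {G : Multigraph V E}

namespace Walk

@[simp] lemma edges_nil (v : V) : (nil v : G.Walk v v).edges = [] := rfl

@[simp] lemma edges_cons {u v w : V} (e : E) (h : G.ends e = s(u, v)) (p : G.Walk v w) :
    (cons e h p).edges = e :: p.edges := rfl

@[simp] lemma verts_nil (v : V) : (nil v : G.Walk v v).verts = [v] := rfl

@[simp] lemma verts_cons {u v w : V} (e : E) (h : G.ends e = s(u, v)) (p : G.Walk v w) :
    (cons e h p).verts = u :: p.verts := rfl

lemma verts_ne_nil {u v : V} (p : G.Walk u v) : p.verts ≠ [] := by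
  cases p <;> simp

lemma start_mem_verts {u v : V} (p : G.Walk u v) : u ∈ p.verts := by
  cases p <;> simp

lemma verts_eq_dropLast_append : ∀ {u v : V} (p : G.Walk u v), p.verts = p.verts.dropLast ++ [v]
  | _, _, .nil _ => rfl
  | _, _, .cons _ _ p => by
      rw [verts_cons, verts_eq_dropLast_append p, List.dropLast_cons_of_ne_nil (by simp),
        List.dropLast_concat, List.cons_append]

lemma mem_verts_of_mem_ends : ∀ {u v : V} (p : G.Walk u v) {e : E} {x : V},
    e ∈ p.edges → x ∈ G.ends e → x ∈ p.verts
  | _, _, .nil _, _, _, he, _ => by simp at he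
  | _, _, .cons f h p, e, x, he, hx => by
      rcases List.mem_cons.mp he with rfl | he
      · rw [h, Sym2.mem_iff] at hx
        rcases hx with rfl | rfl
        · simp
        · simp [p.start_mem_verts]
      · simp [p.mem_verts_of_mem_ends he hx]

def append : ∀ {u v w : V}, G.Walk u v → G.Walk v w → G.Walk u w
  | _, _, _, .nil _, q => q
  | _, _, _, .cons e h p, q => .cons e h (append p q)

@[simp] lemma edges_append : ∀ {u v w : V} (p : G.Walk u v) (q : G.Walk v w),
    (p.append q).edges = p.edges ++ q.edges
  | _, _, _, .nil _, _ => rfl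
  | _, _, _, .cons e h p, q => by simp [append, edges_append p q]

lemma verts_append : ∀ {u v w : V} (p : G.Walk u v) (q : G.Walk v w),
    (p.append q).verts = p.verts.dropLast ++ q.verts
  | _, _, _, .nil _, _ => rfl
  | _, _, _, .cons e h p, q => by
      rw [append, verts_cons, verts_append p q, verts_cons,
        List.dropLast_cons_of_ne_nil p.verts_ne_nil, List.cons_append]

lemma IsPath.edges_nodup : ∀ {u v : V} {p : G.Walk u v}, p.IsPath → p.edges.Nodup
  | _, _, .nil _, _ => by simp
  | _, _, .cons e h p, hp => by
      rw [IsPath, verts_cons, List.nodup_cons] at hp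
      refine List.nodup_cons.mpr ⟨fun he => hp.1 (p.mem_verts_of_mem_ends he ?_), ?_⟩
      · simp [h]
      · exact IsPath.edges_nodup hp.2

lemma exists_split_vertex : ∀ {u v : V} (p : G.Walk u v) {x : V}, x ∈ p.verts →
    ∃ (q : G.Walk u x) (r : G.Walk x v), p.edges = q.edges ++ r.edges ∧
      p.verts = q.verts.dropLast ++ r.verts
  | _, _, .nil _, x, hx => by
      obtain rfl : x = _ := by simpa using hx
      exact ⟨.nil x, .nil x, rfl, rfl⟩
  | u, _, .cons e h p, x, hx => by
      by_cases hxu : x = u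
      · subst hxu
        exact ⟨.nil x, .cons e h p, rfl, rfl⟩
      · obtain ⟨q, r, hedges, hverts⟩ :=
          p.exists_split_vertex ((List.mem_cons.mp hx).resolve_left hxu)
        refine ⟨.cons e h q, r, by simp [hedges], ?_⟩
        rw [verts_cons, verts_cons, hverts, List.dropLast_cons_of_ne_nil q.verts_ne_nil,
          List.cons_append]

lemma exists_split_edge : ∀ {u v : V} (p : G.Walk u v) {e : E}, e ∈ p.edges →
    ∃ (x y : V) (q : G.Walk u x) (r : G.Walk y v), G.ends e = s(x, y) ∧
      p.edges = q.edges ++ e :: r.edges ∧ p.verts = q.verts ++ r.verts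
  | _, _, .nil _, _, he => by simp at he
  | u, _, .cons f h p, e, he => by
      by_cases hef : e = f
      · subst hef
        exact ⟨u, _, .nil u, p, h, rfl, rfl⟩
      · obtain ⟨x, y, q, r, hxy, hedges, hverts⟩ :=
          p.exists_split_edge ((List.mem_cons.mp he).resolve_left hef)
        exact ⟨x, y, .cons f h q, r, hxy, by simp [hedges], by simp [hverts]⟩

lemma exists_isPath : ∀ {u v : V} (p : G.Walk u v),
    ∃ q : G.Walk u v, q.IsPath ∧ ∀ f ∈ q.edges, f ∈ p.edges
  | _, _, .nil v => ⟨.nil v, by simp [IsPath], by simp⟩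
  | u, _, .cons e h p => by
      obtain ⟨q, hq, hqp⟩ := p.exists_isPath
      by_cases hu : u ∈ q.verts
      · obtain ⟨_, r, hedges, hverts⟩ := q.exists_split_vertex hu
        rw [IsPath, hverts] at hq
        refine ⟨r, hq.of_append_right, fun f hf => ?_⟩
        simp [hqp f (hedges ▸ List.mem_append_right _ hf)]
      · refine ⟨.cons e h q, List.nodup_cons.mpr ⟨hu, hq⟩, fun f hf => ?_⟩
        rcases List.mem_cons.mp hf with rfl | hf
        · simp
        · simp [hqp f hf]

lemma exists_rotate {z v : V} (c : G.Walk z z) (hv : v ∈ c.verts) :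
    ∃ c' : G.Walk v v, c'.edges.Perm c.edges ∧ ∀ x ∈ c.verts, x ∈ c'.verts := by
  obtain ⟨q, r, hedges, hverts⟩ := c.exists_split_vertex hv
  refine ⟨r.append q, by rw [edges_append, hedges]; exact List.perm_append_comm, fun x hx => ?_⟩
  rw [hverts, List.mem_append] at hx
  rw [verts_append, List.mem_append]
  rcases hx with hx | hx
  · exact Or.inr ((List.dropLast_sublist _).subset hx)
  · rw [verts_eq_dropLast_append r, List.mem_append, List.mem_singleton] at hx
    rcases hx with hx | rfl
    · exact Or.inl hx
    · exact Or.inr q.start_mem_verts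

lemma exists_arcs {z u v : V} (c : G.Walk z z) (hu : u ∈ c.verts) (hv : v ∈ c.verts) :
    ∃ (p : G.Walk u v) (q : G.Walk v u), (p.edges ++ q.edges).Perm c.edges := by
  obtain ⟨c', hperm, hmem⟩ := c.exists_rotate hu
  obtain ⟨p, q, hedges, -⟩ := c'.exists_split_vertex (hmem v hv)
  exact ⟨p, q, hedges ▸ hperm⟩

lemma exists_mem_edges_mem_ends_of_ne : ∀ {u v : V} (p : G.Walk u v), u ≠ v →
    ∃ g ∈ p.edges, v ∈ G.ends g
  | _, _, .nil _, huv => absurd rfl huv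
  | _, v, .cons (v := m) f hf q, _ => by
      by_cases hmv : m = v
      · exact ⟨f, by simp, by simp [hf, hmv]⟩
      · obtain ⟨g, hg, hvg⟩ := q.exists_mem_edges_mem_ends_of_ne hmv
        exact ⟨g, by simp [hg], hvg⟩

lemma exists_ne_mem_ends {v : V} (c : G.Walk v v) (hnd : c.edges.Nodup) {e : E}
    (he : e ∈ c.edges) (hloop : G.ends e ≠ s(v, v)) :
    ∃ g ∈ c.edges, g ≠ e ∧ v ∈ G.ends g := by
  cases c with
  | nil => simp at he
  | cons d hd rest =>
    rw [edges_cons, List.nodup_cons] at hnd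
    by_cases hed : e = d
    · subst hed
      obtain ⟨g, hg, hvg⟩ :=
        rest.exists_mem_edges_mem_ends_of_ne (by rintro rfl; exact hloop hd)
      exact ⟨g, by simp [hg], by rintro rfl; exact hnd.1 hg, hvg⟩
    · exact ⟨d, by simp, Ne.symm hed, by simp [hd]⟩

end Walk

namespace ReachAvoid

variable {F : Set E}

lemma trans {u v w : V} (h₁ : G.ReachAvoid F u v) (h₂ : G.ReachAvoid F v w) :
    G.ReachAvoid F u w := by
  induction h₂ with
  | refl => exact h₁
  | tail e he hvw _ ih => exact .tail e he hvw ih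

lemma single {e : E} {a b : V} (he : e ∉ F) (h : G.ends e = s(a, b)) : G.ReachAvoid F a b :=
  .tail e he h (.refl a)

lemma symm {u v : V} (h : G.ReachAvoid F u v) : G.ReachAvoid F v u := by
  induction h with
  | refl => exact .refl _
  | tail e he hvw _ ih => exact (single he (hvw.trans Sym2.eq_swap)).trans ih

lemma mono {F' : Set E} (hF : F ⊆ F') {u v : V} (h : G.ReachAvoid F' u v) :
    G.ReachAvoid F u v := by
  induction h with
  | refl => exact .refl _
  | tail e he hvw _ ih => exact .tail e (fun h => he (hF h)) hvw ih

lemma exists_walk {u v : V} (h : G.ReachAvoid F u v) :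
    ∃ p : G.Walk u v, ∀ f ∈ p.edges, f ∉ F := by
  induction h with
  | refl => exact ⟨.nil _, by simp⟩
  | tail e he hvw _ ih =>
    obtain ⟨p, hp⟩ := ih
    refine ⟨p.append (.cons e hvw (.nil _)), fun f hf => ?_⟩
    rcases List.mem_append.mp (Walk.edges_append _ _ ▸ hf) with hf | hf
    · exact hp f hf
    · rwa [List.mem_singleton.mp hf]

lemma exists_isPath {u v : V} (h : G.ReachAvoid F u v) :
    ∃ p : G.Walk u v, p.IsPath ∧ ∀ f ∈ p.edges, f ∉ F := by
  obtain ⟨p, hp⟩ := h.exists_walk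
  obtain ⟨q, hq, hqp⟩ := p.exists_isPath
  exact ⟨q, hq, fun f hf => hp f (hqp f hf)⟩

end ReachAvoid

lemma Walk.reachAvoid {F : Set E} : ∀ {u v : V} (p : G.Walk u v),
    (∀ f ∈ p.edges, f ∉ F) → G.ReachAvoid F u v
  | _, _, .nil v, _ => .refl v
  | _, _, .cons e h p, hp =>
      (ReachAvoid.single (hp e (by simp)) h).trans (p.reachAvoid fun f hf => hp f (by simp [hf]))

lemma reachAvoid_of_forall_ends {F : Set E}
    (hF : ∀ e ∈ F, ∀ x y, G.ends e = s(x, y) → G.ReachAvoid F x y) {u v : V}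
    (h : G.ReachAvoid ∅ u v) : G.ReachAvoid F u v := by
  induction h with
  | refl => exact .refl _
  | tail e _ hvw _ ih =>
    by_cases he : e ∈ F
    · exact ih.trans (hF e he _ _ hvw)
    · exact .tail e he hvw ih

lemma TwoEdgeConnected.reachAvoid (h : G.TwoEdgeConnected) {F : Finset E} (hF : F.card ≤ 1)
    (u v : V) : G.ReachAvoid ↑F u v := by
  rcases Nat.le_one_iff_eq_zero_or_eq_one.mp hF with hF | hF
  · rw [Finset.card_eq_zero.mp hF, Finset.coe_empty]
    exact h.1 u v
  · obtain ⟨f, rfl⟩ := Finset.card_eq_one.mp hF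
    rw [Finset.coe_singleton]
    exact h.2 f u v

section Ears

variable {S : Set V} {T : Set E}

lemma Walk.exists_mem_reachAvoid_of_not_mem (hT : ∀ f ∈ T, ∀ x ∈ G.ends f, x ∈ S) :
    ∀ {m t : V} (Q : G.Walk m t), m ∉ S → t ∈ S →
      ∃ v ∈ S, v ∈ Q.verts ∧ G.ReachAvoid T m v
  | _, _, .nil _, hm, ht => absurd ht hm
  | m, _, .cons (v := m') f h Q, hm, ht => by
      have hstep : G.ReachAvoid T m m' := .single (fun hf => hm (hT f hf m (by simp [h]))) h
      by_cases hm' : m' ∈ S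
      · exact ⟨m', hm', by simp [Q.start_mem_verts], hstep⟩
      · obtain ⟨v, hv, hvQ, hR⟩ := Q.exists_mem_reachAvoid_of_not_mem hT hm' ht
        exact ⟨v, hv, by simp [hvQ], hstep.trans hR⟩

lemma Walk.exists_ear (hT : ∀ f ∈ T, ∀ x ∈ G.ends f, x ∈ S) :
    ∀ {s t : V} (P : G.Walk s t), P.IsPath → s ∈ S → t ∈ S →
      (∃ g ∈ P.edges, g ∉ T) →
      ∃ u v, u ≠ v ∧ u ∈ S ∧ v ∈ S ∧ G.ReachAvoid T u v
  | _, _, .nil _, _, _, _, hg => by simp at hg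
  | s, _, .cons (v := m) f h P, hP, hs, ht, hg => by
      rw [IsPath, verts_cons, List.nodup_cons] at hP
      by_cases hfT : f ∈ T
      · obtain ⟨g, hg, hgT⟩ := hg
        refine P.exists_ear hT hP.2 (hT f hfT m (by simp [h])) ht ⟨g, ?_, hgT⟩
        exact (List.mem_cons.mp hg).resolve_left (by rintro rfl; exact hgT hfT)
      · have hstep : G.ReachAvoid T s m := .single hfT h
        by_cases hm : m ∈ S
        · exact ⟨s, m, fun hsm => hP.1 (hsm ▸ P.start_mem_verts), hs, hm, hstep⟩
        · obtain ⟨v, hv, hvP, hR⟩ := P.exists_mem_reachAvoid_of_not_mem hT hm ht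
          exact ⟨s, v, fun hsv => hP.1 (hsv ▸ hvP), hs, hv, hstep.trans hR⟩

end Ears

lemma IsEdgeCut.card_le_card_of_pairwise_disjoint {ι : Type*} [Fintype ι] {u v : V}
    {F : Finset E} (hF : G.IsEdgeCut u v ↑F) (A : ι → Set E)
    (hA : Pairwise fun i j => Disjoint (A i) (A j))
    (hconn : ∀ i, G.ReachAvoid (A i)ᶜ u v) : Fintype.card ι ≤ F.card := by
  have hmeet : ∀ i, ∃ f ∈ F, f ∈ A i := fun i => by
    by_contra! h
    exact hF ((hconn i).mono fun f hf hfA => h f hf hfA)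
  choose f hfF hfA using hmeet
  have hinj : Function.Injective f := fun i j hij => by
    by_contra hne
    exact Set.disjoint_left.mp (hA hne) (hfA i) (hij ▸ hfA j)
  calc Fintype.card ι ≤ Fintype.card F :=
        Fintype.card_le_of_injective (fun i => ⟨f i, hfF i⟩) fun i j hij =>
          hinj (congrArg Subtype.val hij)
    _ = F.card := Fintype.card_coe F

lemma Walk.three_le_card_of_isEdgeCut {z u v : V} (c : G.Walk z z) (hnd : c.edges.Nodup)
    (hu : u ∈ c.verts) (hv : v ∈ c.verts) (hear : G.ReachAvoid {f | f ∈ c.edges} u v)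
    {F : Finset E} (hF : G.IsEdgeCut u v ↑F) : 3 ≤ F.card := by
  obtain ⟨p, q, hperm⟩ := c.exists_arcs hu hv
  have hpq : p.edges.Disjoint q.edges :=
    List.disjoint_of_nodup_append (hperm.nodup_iff.mpr hnd)
  have hpc : ∀ f ∈ p.edges, f ∈ c.edges :=
    fun f hf => hperm.subset (List.mem_append_left _ hf)
  have hqc : ∀ f ∈ q.edges, f ∈ c.edges :=
    fun f hf => hperm.subset (List.mem_append_right _ hf)
  have h3 := hF.card_le_card_of_pairwise_disjoint
    ![{f | f ∈ p.edges}, {f | f ∈ q.edges}, {f | f ∈ c.edges}ᶜ] ?_ ?_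
  · simpa using h3
  · intro i j hij
    fin_cases i <;> fin_cases j <;> simp [Set.disjoint_left] at hij ⊢ <;> tauto
  · intro i
    fin_cases i
    · exact p.reachAvoid (by simp)
    · exact (q.reachAvoid (by simp)).symm
    · show G.ReachAvoid {f | f ∈ c.edges}ᶜᶜ u v
      rwa [compl_compl]

section EdgeConnectivity

variable {u v : V} {F : Finset E}

lemma edgeConn_le (hF : G.IsEdgeCut u v ↑F) : G.edgeConn u v ≤ F.card :=
  Nat.sInf_le ⟨F, rfl, hF⟩

lemma reachAvoid_of_card_lt_edgeConn (h : F.card < G.edgeConn u v) : G.ReachAvoid ↑F u v :=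
  not_not.mp fun hF => (edgeConn_le hF).not_gt h

lemma edgeConn_eq_of_isEdgeCut (hF : G.IsEdgeCut u v ↑F)
    (hmin : ∀ F' : Finset E, F'.card < F.card → G.ReachAvoid ↑F' u v) :
    G.edgeConn u v = F.card :=
  (edgeConn_le hF).antisymm <| le_csInf ⟨_, F, rfl, hF⟩ fun _ ⟨F', hk, hF'⟩ =>
    hk ▸ not_lt.mp fun hlt => hF' (hmin F' hlt)

lemma exists_isEdgeCut_card_eq_edgeConn (h : G.edgeConn u v ≠ 0) :
    ∃ F : Finset E, F.card = G.edgeConn u v ∧ G.IsEdgeCut u v ↑F := by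
  refine Nat.sInf_mem (s := {k | ∃ F : Finset E, F.card = k ∧ G.IsEdgeCut u v ↑F})
    (Set.nonempty_iff_ne_empty.mpr fun hempty => h ?_)
  rw [edgeConn, hempty, Nat.sInf_empty]

lemma twoEdgeConnected_of_two_le_edgeConn (h : ∀ u v, u ≠ v → 2 ≤ G.edgeConn u v) :
    G.TwoEdgeConnected := by
  have hra : ∀ F : Finset E, F.card ≤ 1 → ∀ u v, G.ReachAvoid ↑F u v := fun F hF u v => by
    rcases eq_or_ne u v with rfl | huv
    · exact .refl u
    · exact reachAvoid_of_card_lt_edgeConn ((Nat.lt_succ_of_le hF).trans_le (h u v huv))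
  exact ⟨fun u v => by simpa using hra ∅ (by simp) u v,
    fun e => by simpa using hra {e} (by simp)⟩

end EdgeConnectivity

section Cycles

variable [DecidableEq E]

lemma isSimpleCycleOn_cons {a b : V} {e : E} (P : G.Walk b a) (hP : P.IsPath)
    (hends : G.ends e = s(a, b)) (he : e ∉ P.edges) :
    G.IsSimpleCycleOn (Walk.cons e hends P).edges.toFinset := by
  refine ⟨a, .cons e hends P, by simp, List.nodup_cons.mpr ⟨he, hP.edges_nodup⟩, ?_, rfl⟩
  have hverts := P.verts_eq_dropLast_append
  rw [Walk.IsPath, hverts, List.nodup_append] at hP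
  rw [Walk.verts_cons, hverts, ← List.cons_append, List.dropLast_concat]
  exact List.nodup_cons.mpr ⟨fun h => hP.2.2 a h a (by simp) rfl, hP.1⟩

namespace IsSimpleCycleOn

variable {S : Finset E}

lemma reachAvoid_singleton (hS : G.IsSimpleCycleOn S) {e : E} (he : e ∈ S) {x y : V}
    (hxy : G.ends e = s(x, y)) : G.ReachAvoid {e} x y := by
  obtain ⟨z, c, -, hnd, -, rfl⟩ := hS
  obtain ⟨x', y', q, r, hxy', hedges, -⟩ := c.exists_split_edge (List.mem_toFinset.mp he)
  rw [hedges, List.nodup_append, List.nodup_cons] at hnd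
  have hr : G.ReachAvoid {e} y' z :=
    r.reachAvoid fun f hf hfe => hnd.2.1.1 (Set.mem_singleton_iff.mp hfe ▸ hf)
  have hq : G.ReachAvoid {e} z x' :=
    q.reachAvoid fun f hf hfe => hnd.2.2 f hf e (by simp) (Set.mem_singleton_iff.mp hfe)
  have hbypass := hr.trans hq
  rcases Sym2.eq_iff.mp (hxy.symm.trans hxy') with ⟨rfl, rfl⟩ | ⟨rfl, rfl⟩
  · exact hbypass.symm
  · exact hbypass

lemma exists_isPath_erase (hS : G.IsSimpleCycleOn S) {e : E} (he : e ∈ S) :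
    ∃ (x y : V) (P : G.Walk y x), G.ends e = s(x, y) ∧ P.IsPath ∧
      ∀ f ∈ S, f ≠ e → f ∈ P.edges := by
  obtain ⟨z, c, -, -, hvnd, rfl⟩ := hS
  obtain ⟨x, y, q, r, hxy, hedges, hverts⟩ := c.exists_split_edge (List.mem_toFinset.mp he)
  refine ⟨x, y, r.append q, hxy, ?_, fun f hf hfe => ?_⟩
  · rw [hverts, List.dropLast_append_of_ne_nil r.verts_ne_nil] at hvnd
    rw [Walk.IsPath, Walk.verts_append]
    exact List.perm_append_comm.nodup_iff.mp hvnd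
  · rw [List.mem_toFinset, hedges] at hf
    simp only [List.mem_append, List.mem_cons, hfe, false_or] at hf
    simpa [or_comm] using hf

lemma exists_ne_mem_ends (hS : G.IsSimpleCycleOn S) {e : E} (he : e ∈ S) {v : V}
    (hv : v ∈ G.ends e) (hloop : G.ends e ≠ s(v, v)) :
    ∃ g ∈ S, g ≠ e ∧ v ∈ G.ends g := by
  obtain ⟨z, c, -, hnd, -, rfl⟩ := hS
  rw [List.mem_toFinset] at he
  obtain ⟨c', hperm, -⟩ := c.exists_rotate (c.mem_verts_of_mem_ends he hv)
  obtain ⟨g, hg, hge, hvg⟩ :=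
    c'.exists_ne_mem_ends (hperm.nodup_iff.mpr hnd) (hperm.mem_iff.mpr he) hloop
  exact ⟨g, List.mem_toFinset.mpr (hperm.subset hg), hge, hvg⟩

lemma subset_of_mem_of_forall_isEdgeCut
    (hcut : ∀ u v, u ≠ v → ∃ F : Finset E, F.card ≤ 2 ∧ G.IsEdgeCut u v ↑F)
    {S' : Finset E} (hS : G.IsSimpleCycleOn S) (hS' : G.IsSimpleCycleOn S') {e : E}
    (he : e ∈ S) (he' : e ∈ S') : S' ⊆ S := by
  intro g hg'
  by_contra hg
  obtain ⟨z, c, -, hnd, -, rfl⟩ := hS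
  obtain ⟨x, y, P, hxy, hP, hPS'⟩ := hS'.exists_isPath_erase he'
  have hends : ∀ f ∈ {f | f ∈ c.edges}, ∀ w ∈ G.ends f, w ∈ {w | w ∈ c.verts} :=
    fun f hf w hw => c.mem_verts_of_mem_ends hf hw
  rw [List.mem_toFinset] at he hg
  obtain ⟨u, v, huv, hu, hv, hear⟩ :=
    P.exists_ear hends hP (hends e he y (by simp [hxy])) (hends e he x (by simp [hxy]))
      ⟨g, hPS' g hg' (by rintro rfl; exact hg he), hg⟩
  obtain ⟨F, hF, hFcut⟩ := hcut u v huv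
  have := c.three_le_card_of_isEdgeCut hnd hu hv hear hFcut
  omega

end IsSimpleCycleOn

end Cycles

section Cactus

variable [DecidableEq E]

lemma IsCactus.twoEdgeConnected (h : G.IsCactus) : G.TwoEdgeConnected := by
  refine ⟨h.1, fun f u v => reachAvoid_of_forall_ends (fun e he x y hxy => ?_) (h.1 u v)⟩
  obtain rfl := Set.mem_singleton_iff.mp he
  obtain ⟨S, hS, heS⟩ := (h.2 e).exists
  exact hS.reachAvoid_singleton heS hxy

lemma IsCactus.exists_isEdgeCut (h : G.IsCactus) {v w : V} (hvw : v ≠ w) :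
    ∃ F : Finset E, F.card = 2 ∧ G.IsEdgeCut v w ↑F := by
  obtain ⟨p, hp, -⟩ := (h.1 v w).exists_isPath
  cases p with
  | nil => exact absurd rfl hvw
  | @cons _ x _ e h₁ tail =>
    rw [Walk.IsPath, Walk.verts_cons, List.nodup_cons] at hp
    obtain ⟨C, ⟨hC, heC⟩, hCuniq⟩ := h.2 e
    have hloop : G.ends e ≠ s(v, v) := fun hvv => by
      obtain rfl : v = x := by simpa [hvv] using h₁
      exact hp.1 tail.start_mem_verts
    obtain ⟨g, hgC, hge, hvg⟩ := hC.exists_ne_mem_ends heC (by simp [h₁]) hloop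
    refine ⟨{e, g}, Finset.card_pair hge.symm, fun hreach => ?_⟩
    -- every edge of the cut meets `v`, which the rest of the path avoids
    have htail : G.ReachAvoid ↑({e, g} : Finset E) x w :=
      tail.reachAvoid fun f hf hfF => hp.1 <| tail.mem_verts_of_mem_ends hf <| by
        rcases Finset.mem_insert.mp hfF with rfl | hfg
        · simp [h₁]
        · rwa [Finset.mem_singleton.mp hfg]
    obtain ⟨P, hP, hPF⟩ := (hreach.trans htail.symm).symm.exists_isPath
    have hcyc := isSimpleCycleOn_cons P hP h₁ fun heP => hPF e heP (by simp)
    have hgP : g ∈ (Walk.cons e h₁ P).edges.toFinset := hCuniq _ ⟨hcyc, by simp⟩ ▸ hgC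
    rw [Walk.edges_cons, List.toFinset_cons, Finset.mem_insert, List.mem_toFinset] at hgP
    exact hgP.elim hge fun hgP => hPF g hgP (by simp)

lemma isCactus_of_twoEdgeConnected (h : G.TwoEdgeConnected)
    (hcut : ∀ u v, u ≠ v → ∃ F : Finset E, F.card ≤ 2 ∧ G.IsEdgeCut u v ↑F) :
    G.IsCactus := by
  refine ⟨h.1, fun e => ?_⟩
  obtain ⟨a, b, hab⟩ : ∃ a b, G.ends e = s(a, b) :=
    Sym2.ind (f := fun z => ∃ a b, z = s(a, b)) (fun a b => ⟨a, b, rfl⟩) _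
  obtain ⟨P, hP, hPe⟩ := (h.2 e b a).exists_isPath
  have hcyc := isSimpleCycleOn_cons P hP hab fun heP => hPe e heP rfl
  refine ⟨_, ⟨hcyc, by simp⟩, fun S ⟨hS, heS⟩ => ?_⟩
  exact (hcyc.subset_of_mem_of_forall_isEdgeCut hcut hS (by simp) heS).antisymm
    (hS.subset_of_mem_of_forall_isEdgeCut hcut hcyc heS (by simp))

end Cactus

end Multigraph

theorem stmt_0_general {V E : Type} [DecidableEq E]
    (G : Multigraph V E) :
    G.IsCactus ↔ ∀ v w : V, v ≠ w → G.edgeConn v w = 2 := by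
  refine ⟨fun h v w hvw => ?_, fun h => ?_⟩
  · obtain ⟨F, hF, hcut⟩ := h.exists_isEdgeCut hvw
    rw [← hF]
    exact Multigraph.edgeConn_eq_of_isEdgeCut hcut fun F' hF' =>
      h.twoEdgeConnected.reachAvoid (by omega) v w
  · refine Multigraph.isCactus_of_twoEdgeConnected
      (Multigraph.twoEdgeConnected_of_two_le_edgeConn fun u v huv => (h u v huv).ge)
      fun u v huv => ?_
    obtain ⟨F, hF, hcut⟩ :=
      Multigraph.exists_isEdgeCut_card_eq_edgeConn ((h u v huv).symm ▸ two_ne_zero)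
    exact ⟨F, (hF.trans (h u v huv)).le, hcut⟩

/-- A finite multigraph `G` is a cactus if and only if for every pair of
distinct vertices `v, w` the edge connectivity satisfies `λ(v, w) = 2`. -/
theorem stmt_0 {V E : Type} [Nonempty V] [Fintype V] [Fintype E] [DecidableEq E]
    (G : Multigraph V E) :
    G.IsCactus ↔ ∀ v w : V, v ≠ w → G.edgeConn v w = 2 :=
  stmt_0_general G
end

section
/- Let C be the cycle graph of length n and let π be a non-crossing partition of its vertex set, so that the quotient C^π is a cactus. Then the map assigning to each block B of the Kreweras complement K(π) the subgraph of C^π whose edge set is B is a bijection from the blocks of K(π) onto the pads (simple cycles) of C^π; explicitly, the block B = (e_{i₁}, …, e_{i_k}) with i₁ < … < i_k corresponds to the pad through the π-classes of v_{i₁}, v_{i₂}, …, v_{i_k}, where for each l the vertex v_{i_l + 1} is π-equivalent to v_{i_{l+1}} (and v_{i_k + 1} is π-equivalent to v_{i₁}). -/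
set_option autoImplicit false

/-! Edges `e_a` and `e_b` lie in one block of `K(π)` exactly when the vertices
`v_{a+1}, …, v_b` between them form a union of blocks of `π`: this relation is non-crossing
with `π`, and every partition of the edges that is non-crossing with `π` refines it.

Let `e_j` follow `e_a` in its block of `K(π)`, and let `v_m` be the last vertex of the block of
`v_{a+1}` in cyclic order from `v_{a+1}`. Non-crossingness of `π` makes `v_{a+1}, …, v_m` a
union of blocks, so `e_m` lies in the block of `e_a` and `m` is not before `j`; conversely the
union of blocks `v_{a+1}, …, v_j` contains `v_m`. Hence `m = j`, and in `C^π` the edge `e_a`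
joins the classes of `v_a` and `v_j`. Following these successors around a block of `K(π)`
gives a closed walk in `C^π`, with distinct vertices since two edges in one block of `K(π)`
never have `π`-equivalent left endpoints. So every block is a pad, and as each edge of the
cactus lies on exactly one pad, these are all the pads. -/

namespace Multigraph

variable {V E : Type} [DecidableEq E] {G : Multigraph V E}

theorem IsSimpleCycleOn.nonempty {S : Finset E} (hS : G.IsSimpleCycleOn S) : S.Nonempty := by
  obtain ⟨_, p, hne, -, -, rfl⟩ := hS
  exact List.toFinset_nonempty_iff _ |>.2 hne

theorem IsCactus.eq_of_mem_of_mem (hG : G.IsCactus) {S T : Finset E} (hS : G.IsSimpleCycleOn S)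
    (hT : G.IsSimpleCycleOn T) {e : E} (heS : e ∈ S) (heT : e ∈ T) : S = T :=
  (hG.2 e).unique ⟨hS, heS⟩ ⟨hT, heT⟩

end Multigraph

section CyclicOrder

open Fin.NatCast Fin.CommRing

variable {n : ℕ}

namespace Fin

theorem val_sub_add_val_eq_or (a b : Fin n) :
    (a - b).val + b.val = a.val ∨ (a - b).val + b.val = a.val + n := by
  rcases le_or_gt b a with h | h
  · left
    rw [coe_sub_iff_le.2 h]
    have : b.val ≤ a.val := h
    omega
  · right
    rw [coe_sub_iff_lt.2 h]
    have : a.val < b.val := h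
    omega

end Fin

theorem NonCrossingRel.rel_of_cyclic {r : Setoid (Fin n)} (hr : NonCrossingRel r.r)
    {c z₁ z₂ z₃ z₄ : Fin n} (h₁₂ : (z₁ - c).val < (z₂ - c).val)
    (h₂₃ : (z₂ - c).val < (z₃ - c).val) (h₃₄ : (z₃ - c).val < (z₄ - c).val)
    (h₁₃ : r z₁ z₃) (h₂₄ : r z₂ z₄) : r z₁ z₂ := by
  by_contra hn₁₂
  have hn₂₃ : ¬ r z₂ z₃ := fun h => hn₁₂ (r.trans h₁₃ (r.symm h))
  have hn₃₄ : ¬ r z₃ z₄ := fun h => hn₁₂ (r.trans (r.trans h₁₃ h) (r.symm h₂₄))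
  have hn₄₁ : ¬ r z₄ z₁ := fun h => hn₁₂ (r.symm (r.trans h₂₄ h))
  have := Fin.val_sub_add_val_eq_or z₁ c
  have := Fin.val_sub_add_val_eq_or z₂ c
  have := Fin.val_sub_add_val_eq_or z₃ c
  have := Fin.val_sub_add_val_eq_or z₄ c
  have := (z₄ - c).isLt
  apply hr
  -- the points that wrap around past `n - 1` come last; rotate them to the front
  by_cases w₄ : z₄.val + n ≠ (z₄ - c).val + c.val
  · exact ⟨z₁, z₂, z₃, z₄, by omega, by omega, by omega, h₁₃, h₂₄, hn₁₂⟩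
  by_cases w₃ : z₃.val + n ≠ (z₃ - c).val + c.val
  · exact ⟨z₄, z₁, z₂, z₃, by omega, by omega, by omega, r.symm h₂₄, h₁₃, hn₄₁⟩
  by_cases w₂ : z₂.val + n ≠ (z₂ - c).val + c.val
  · exact ⟨z₃, z₄, z₁, z₂, by omega, by omega, by omega, r.symm h₁₃, r.symm h₂₄, hn₃₄⟩
  by_cases w₁ : z₁.val + n ≠ (z₁ - c).val + c.val
  · exact ⟨z₂, z₃, z₄, z₁, by omega, by omega, by omega, h₂₄, r.symm h₁₃, hn₂₃⟩
  · exact ⟨z₁, z₂, z₃, z₄, by omega, by omega, by omega, h₁₃, h₂₄, hn₁₂⟩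

variable [NeZero n]

namespace Fin

theorem val_add_one_eq_or (a : Fin n) :
    (a + 1).val = a.val + 1 ∨ (a + 1).val = 0 ∧ a.val + 1 = n := by
  have := a.isLt
  rw [val_add, val_one']
  rcases Nat.lt_or_ge 1 n with h | h
  · rw [Nat.mod_eq_of_lt h]
    rcases Nat.lt_or_ge (a.val + 1) n with h' | h'
    · exact .inl (Nat.mod_eq_of_lt h')
    · right
      have : a.val + 1 = n := by omega
      simp [this]
  · have : n = 1 := by have := NeZero.pos n; omega
    subst this
    simp

theorem eq_of_val_sub_eq {c x y : Fin n} (h : (x - c).val = (y - c).val) : x = y :=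
  sub_left_injective (Fin.ext h)

theorem val_add_natCast_sub_add_one (i : Fin n) {d : ℕ} (hd₀ : 0 < d) (hd : d ≤ n) :
    (i + (d : Fin n) - (i + 1)).val = d - 1 := by
  have : i + (d : Fin n) - (i + 1) = ((d - 1 : ℕ) : Fin n) := by
    rw [Nat.cast_sub (show 1 ≤ d from hd₀)]
    push_cast
    ring
  rw [this, val_cast_of_lt (by omega)]

theorem add_natCast_val_sub_add_one (i x : Fin n) :
    i + (((x - (i + 1)).val + 1 : ℕ) : Fin n) = x := by
  push_cast
  ring

theorem val_sub_add_one_of_lt {i e b : Fin n} (h : (e - i).val < (b - i).val) :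
    (b - (e + 1)).val + (e - i).val + 1 = (b - i).val := by
  have := val_sub_add_val_eq_or b i
  have := val_sub_add_val_eq_or e i
  have := val_sub_add_val_eq_or b (e + 1)
  have := val_add_one_eq_or e
  have := (b - (e + 1)).isLt
  have := (b - i).isLt
  omega

theorem val_sub_add_one_of_le {i e b : Fin n} (h : (b - i).val ≤ (e - i).val) :
    (b - (e + 1)).val + (e - i).val + 1 = (b - i).val + n := by
  have := val_sub_add_val_eq_or b i
  have := val_sub_add_val_eq_or e i
  have := val_sub_add_val_eq_or b (e + 1)
  have := val_add_one_eq_or e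
  have := (b - (e + 1)).isLt
  have := (e - i).isLt
  omega

end Fin

end CyclicOrder

section Interlacing

variable {n : ℕ}

def interVertex (a : Fin n) : Fin (2 * n) := ⟨2 * a.val, by have := a.isLt; omega⟩

def interEdge (a : Fin n) : Fin (2 * n) := ⟨2 * a.val + 1, by have := a.isLt; omega⟩

theorem interVertex_lt_interVertex {a b : Fin n} : interVertex a < interVertex b ↔ a < b :=
  show 2 * a.val < 2 * b.val ↔ a.val < b.val by omega

theorem interEdge_lt_interEdge {a b : Fin n} : interEdge a < interEdge b ↔ a < b :=
  show 2 * a.val + 1 < 2 * b.val + 1 ↔ a.val < b.val by omega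

theorem interVertex_lt_interEdge {a b : Fin n} : interVertex a < interEdge b ↔ a ≤ b :=
  show 2 * a.val < 2 * b.val + 1 ↔ a.val ≤ b.val by omega

theorem interEdge_lt_interVertex {a b : Fin n} : interEdge a < interVertex b ↔ a < b :=
  show 2 * a.val + 1 < 2 * b.val ↔ a.val < b.val by omega

variable {σ κ : Setoid (Fin n)}

theorem interRel_interVertex {a b : Fin n} :
    interRel σ κ (interVertex a) (interVertex b) ↔ σ a b := by
  simp [interRel, interVertex]

theorem interRel_interEdge {a b : Fin n} :
    interRel σ κ (interEdge a) (interEdge b) ↔ κ a b := by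
  have (c : Fin n) : (2 * c.val + 1) / 2 = c.val := by omega
  simp [interRel, interEdge, this]

theorem not_interRel_interVertex_interEdge (a b : Fin n) :
    ¬ interRel σ κ (interVertex a) (interEdge b) := by
  simp [interRel, interVertex, interEdge]

theorem not_interRel_interEdge_interVertex (a b : Fin n) :
    ¬ interRel σ κ (interEdge a) (interVertex b) := by
  simp [interRel, interVertex, interEdge]

theorem interRel_iff {x y : Fin (2 * n)} :
    interRel σ κ x y ↔
      (∃ a b, x = interVertex a ∧ y = interVertex b ∧ σ a b) ∨
        (∃ a b, x = interEdge a ∧ y = interEdge b ∧ κ a b) := by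
  constructor
  · rintro (⟨hx, hy, h⟩ | ⟨hx, hy, h⟩)
    · exact .inl ⟨_, _, Fin.ext (by simp [interVertex]; omega),
        Fin.ext (by simp [interVertex]; omega), h⟩
    · exact .inr ⟨_, _, Fin.ext (by simp [interEdge]; omega),
        Fin.ext (by simp [interEdge]; omega), h⟩
  · rintro (⟨a, b, rfl, rfl, h⟩ | ⟨a, b, rfl, rfl, h⟩)
    · exact interRel_interVertex.2 h
    · exact interRel_interEdge.2 h

end Interlacing

section Kreweras

open Fin.CommRing

variable {n : ℕ} [NeZero n]

/-- The vertices `v_{a+1}, …, v_b` lying between the edges `e_a` and `e_b` of the cycle;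
when `a = b` this is every vertex. -/
def cyclicIoc (a b : Fin n) : Set (Fin n) := {x | (x - (a + 1)).val ≤ (b - (a + 1)).val}

theorem mem_cyclicIoc_iff {a b x : Fin n} :
    x ∈ cyclicIoc a b ↔ (a < b → a < x ∧ x ≤ b) ∧ (b ≤ a → a < x ∨ x ≤ b) := by
  have := Fin.val_add_one_eq_or a
  have := Fin.val_sub_add_val_eq_or x (a + 1)
  have := Fin.val_sub_add_val_eq_or b (a + 1)
  have := x.isLt
  have := b.isLt
  simp only [cyclicIoc, Set.mem_ofPred_eq]
  omega

def krewerasSetoid (σ : Setoid (Fin n)) : Setoid (Fin n) where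
  r a b := ∀ x y, σ x y → (x ∈ cyclicIoc a b ↔ y ∈ cyclicIoc a b)
  iseqv := by
    refine ⟨fun a x y _ => ?_, fun {a b} h x y hxy => ?_, fun {a b c} hab hbc x y hxy => ?_⟩
    · simp only [mem_cyclicIoc_iff]
      omega
    · have := h x y hxy
      simp only [mem_cyclicIoc_iff] at this ⊢
      omega
    · have h₁ := hab x y hxy
      have h₂ := hbc x y hxy
      simp only [mem_cyclicIoc_iff] at h₁ h₂ ⊢
      omega

variable {σ : Setoid (Fin n)}

theorem eq_of_krewerasSetoid_of_rel {a b : Fin n} (hk : krewerasSetoid σ a b) (hs : σ a b) :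
    a = b := by
  have := (hk b a (σ.symm hs)).1
  simp only [mem_cyclicIoc_iff] at this
  omega

theorem le_krewerasSetoid {κ : Setoid (Fin n)} (hκ : NonCrossingRel (interRel σ κ)) :
    κ ≤ krewerasSetoid σ := by
  have of_lt {a b : Fin n} (hab : a < b) (hk : κ a b) : krewerasSetoid σ a b := by
    suffices out : ∀ x y, σ x y → a < x → x ≤ b → a < y ∧ y ≤ b by
      intro x y hxy
      simp only [mem_cyclicIoc_iff]
      have := out x y hxy
      have := out y x (σ.symm hxy)
      omega
    intro x y hxy hax hxb
    by_contra hy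
    apply hκ
    rcases not_and_or.1 hy with hy | hy
    · exact ⟨interVertex y, interEdge a, interVertex x, interEdge b,
        interVertex_lt_interEdge.2 (not_lt.1 hy), interEdge_lt_interVertex.2 hax,
        interVertex_lt_interEdge.2 hxb, interRel_interVertex.2 (σ.symm hxy),
        interRel_interEdge.2 hk, not_interRel_interVertex_interEdge y a⟩
    · exact ⟨interEdge a, interVertex x, interEdge b, interVertex y,
        interEdge_lt_interVertex.2 hax, interVertex_lt_interEdge.2 hxb,
        interEdge_lt_interVertex.2 (not_le.1 hy), interRel_interEdge.2 hk,
        interRel_interVertex.2 hxy, not_interRel_interEdge_interVertex a x⟩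
  intro a b hk
  rcases lt_trichotomy a b with hab | rfl | hba
  · exact of_lt hab hk
  · exact (krewerasSetoid σ).refl a
  · exact (krewerasSetoid σ).symm (of_lt hba (κ.symm hk))

theorem nonCrossingRel_interRel_krewerasSetoid (hσ : NonCrossingRel σ) :
    NonCrossingRel (interRel σ (krewerasSetoid σ)) := by
  rintro ⟨p₁, p₂, p₃, p₄, h₁₂, h₂₃, h₃₄, h₁₃, h₂₄, hn₁₂⟩
  rcases interRel_iff.1 h₁₃ with ⟨a₁, a₃, rfl, rfl, r₁₃⟩ | ⟨a₁, a₃, rfl, rfl, r₁₃⟩ <;>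
    rcases interRel_iff.1 h₂₄ with ⟨a₂, a₄, rfl, rfl, r₂₄⟩ | ⟨a₂, a₄, rfl, rfl, r₂₄⟩ <;>
    simp only [interVertex_lt_interVertex, interEdge_lt_interEdge, interVertex_lt_interEdge,
      interEdge_lt_interVertex] at h₁₂ h₂₃ h₃₄
  · exact hσ ⟨a₁, a₂, a₃, a₄, by omega, by omega, by omega, r₁₃, r₂₄,
      fun h => hn₁₂ (interRel_interVertex.2 h)⟩
  · have := r₂₄ a₁ a₃ r₁₃
    simp only [mem_cyclicIoc_iff] at this
    omega
  · have := r₁₃ a₂ a₄ r₂₄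
    simp only [mem_cyclicIoc_iff] at this
    omega
  · obtain ⟨x, y, hxy, hn⟩ : ∃ x y, σ x y ∧ ¬(x ∈ cyclicIoc a₁ a₂ ↔ y ∈ cyclicIoc a₁ a₂) := by
      by_contra! h
      exact hn₁₂ (interRel_interEdge.2 h)
    have h₁ := r₁₃ x y hxy
    have h₂ := r₂₄ x y hxy
    simp only [mem_cyclicIoc_iff] at h₁ h₂ hn
    omega

theorem IsKrewerasComplement.eq_krewerasSetoid {κ : Setoid (Fin n)} (hσ : NonCrossingRel σ)
    (hκ : IsKrewerasComplement σ κ) : κ = krewerasSetoid σ :=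
  le_antisymm (le_krewerasSetoid hκ.1) (hκ.2 _ (nonCrossingRel_interRel_krewerasSetoid hσ))

end Kreweras

section Successor

open Fin.CommRing

variable {n : ℕ}

theorem mem_setoidClass {κ : Setoid (Fin n)} {i j : Fin n} : j ∈ setoidClass κ i ↔ κ i j := by
  simp [setoidClass]

theorem setoidClass_eq_of_rel {κ : Setoid (Fin n)} {i e : Fin n} (h : κ i e) :
    setoidClass κ e = setoidClass κ i := by
  ext b
  simp only [mem_setoidClass]
  exact ⟨κ.trans h, κ.trans (κ.symm h)⟩

variable [NeZero n]

theorem cyclicNextIn_iff {B : Finset (Fin n)} {i j : Fin n} :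
    CyclicNextIn B i j ↔ i ∈ B ∧ j ∈ B ∧ ∀ b ∈ B, (j - (i + 1)).val ≤ (b - (i + 1)).val := by
  constructor
  · rintro ⟨hi, hj, d, hd₀, hdn, rfl, hmin⟩
    refine ⟨hi, hj, fun b hb => ?_⟩
    rw [Fin.val_add_natCast_sub_add_one i hd₀ hdn]
    by_contra! hlt
    refine hmin ((b - (i + 1)).val + 1) (by omega) (by omega) ?_
    rwa [Fin.add_natCast_val_sub_add_one]
  · rintro ⟨hi, hj, hmin⟩
    have := (j - (i + 1)).isLt
    refine ⟨hi, hj, (j - (i + 1)).val + 1, by omega, by omega,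
      (Fin.add_natCast_val_sub_add_one i j).symm, fun d hd₀ hd hmem => ?_⟩
    have := hmin _ hmem
    rw [Fin.val_add_natCast_sub_add_one i hd₀ (by omega)] at this
    omega

theorem CyclicNextIn.val_sub_lt {B : Finset (Fin n)} {e j i : Fin n} (h : CyclicNextIn B e j)
    (hi : i ∈ B) (hji : j ≠ i) : (e - i).val < (j - i).val := by
  have hj0 : (j - i).val ≠ 0 := fun h0 =>
    hji (Fin.eq_of_val_sub_eq (c := i) (by rwa [sub_self, Fin.val_zero]))
  have := (cyclicNextIn_iff.1 h).2.2 i hi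
  have := Fin.val_sub_add_one_of_le (i := i) (e := e) (b := i) (by simp)
  rw [sub_self, Fin.val_zero] at this
  by_contra! hle
  have := Fin.val_sub_add_one_of_le hle
  omega

theorem CyclicNextIn.val_sub_le {B : Finset (Fin n)} {e j i b : Fin n} (h : CyclicNextIn B e j)
    (hb : b ∈ B) (hlt : (e - i).val < (b - i).val) :
    (e - i).val < (j - i).val ∧ (j - i).val ≤ (b - i).val := by
  have := (cyclicNextIn_iff.1 h).2.2 b hb
  have := Fin.val_sub_add_one_of_lt hlt
  have := (b - i).isLt
  by_cases hej : (e - i).val < (j - i).val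
  · have := Fin.val_sub_add_one_of_lt hej
    omega
  · have := Fin.val_sub_add_one_of_le (not_lt.1 hej)
    omega

theorem exists_cyclicNextIn {B : Finset (Fin n)} {i : Fin n} (hi : i ∈ B) :
    ∃ j, CyclicNextIn B i j := by
  obtain ⟨j, hj, hmin⟩ := B.exists_min_image (fun b => (b - (i + 1)).val) ⟨i, hi⟩
  exact ⟨j, cyclicNextIn_iff.2 ⟨hi, hj, hmin⟩⟩

theorem rel_add_one_of_cyclicNextIn {σ : Setoid (Fin n)} (hσ : NonCrossingRel σ) {a j : Fin n}
    (h : CyclicNextIn (setoidClass (krewerasSetoid σ) a) a j) : σ (a + 1) j := by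
  obtain ⟨-, hj, hjmin⟩ := cyclicNextIn_iff.1 h
  rw [mem_setoidClass] at hj
  set w := a + 1
  obtain ⟨m, hm, hmmax⟩ := (setoidClass σ w).exists_max_image (fun x => (x - w).val)
    ⟨w, mem_setoidClass.2 (σ.refl w)⟩
  rw [mem_setoidClass] at hm
  have hmk : krewerasSetoid σ a m := by
    suffices closed : ∀ x y, σ x y → x ∈ cyclicIoc a m → y ∈ cyclicIoc a m from
      fun x y hxy => ⟨closed x y hxy, closed y x (σ.symm hxy)⟩
    intro x y hxy hx
    by_contra hy
    simp only [cyclicIoc, Set.mem_ofPred_eq, not_le] at hx hy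
    by_cases hwx : σ w x
    · exact hy.not_ge (hmmax y (mem_setoidClass.2 (σ.trans hwx hxy)))
    · have hxw : (w - w).val < (x - w).val := by
        refine lt_of_le_of_ne (by simp) fun h => hwx ?_
        rw [Fin.eq_of_val_sub_eq h]
      have hxm : (x - w).val < (m - w).val :=
        lt_of_le_of_ne hx fun h => hwx (Fin.eq_of_val_sub_eq h ▸ hm)
      exact hwx (hσ.rel_of_cyclic hxw hxm hy hm hxy)
  have hjm : (j - w).val ≤ (m - w).val := hjmin m (mem_setoidClass.2 hmk)
  have hmj : (m - w).val ≤ (j - w).val := (hj w m hm).1 (by simp [cyclicIoc, w])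
  rwa [Fin.eq_of_val_sub_eq (le_antisymm hmj hjm)] at hm

end Successor

section Pads

open Fin.CommRing

variable {n : ℕ} [NeZero n]

theorem quot_cycleGraph_ends (σ : Setoid (Fin n)) (e : Fin n) :
    ((cycleGraph n).quot σ).ends e = s(Quotient.mk σ e, Quotient.mk σ (e + 1)) :=
  Sym2.map_mk _ _ _

variable {σ : Setoid (Fin n)}

theorem exists_walk_krewerasSetoid (hσ : NonCrossingRel σ) {i e : Fin n}
    (he : krewerasSetoid σ i e) :
    ∃ p : ((cycleGraph n).quot σ).Walk (Quotient.mk σ e) (Quotient.mk σ i),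
      p.edges.Nodup ∧
      (∀ b, b ∈ p.edges ↔ krewerasSetoid σ i b ∧ (e - i).val ≤ (b - i).val) ∧
      p.verts = p.edges.map (Quotient.mk σ) ++ [Quotient.mk σ i] := by
  obtain ⟨j, hj⟩ := exists_cyclicNextIn (mem_setoidClass.2 ((krewerasSetoid σ).refl e))
  have hends : ((cycleGraph n).quot σ).ends e = s(Quotient.mk σ e, Quotient.mk σ j) := by
    rw [quot_cycleGraph_ends, Quotient.sound (rel_add_one_of_cyclicNextIn hσ hj)]
  rw [setoidClass_eq_of_rel he] at hj
  have hi : i ∈ setoidClass (krewerasSetoid σ) i := mem_setoidClass.2 ((krewerasSetoid σ).refl i)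
  by_cases hji : j = i
  · subst j
    refine ⟨.cons e hends (.nil _), by simp [Multigraph.Walk.edges], fun b => ?_,
      by simp [Multigraph.Walk.edges, Multigraph.Walk.verts]⟩
    simp only [Multigraph.Walk.edges, List.mem_singleton]
    refine ⟨by rintro rfl; exact ⟨he, le_rfl⟩, fun ⟨hb, hle⟩ => ?_⟩
    by_contra hbe
    have hlt := lt_of_le_of_ne hle fun h => hbe (Fin.eq_of_val_sub_eq h).symm
    simpa using (hj.val_sub_le (mem_setoidClass.2 hb) hlt).1
  · have hlt := hj.val_sub_lt hi hji
    obtain ⟨p, hnd, hmem, hverts⟩ := exists_walk_krewerasSetoid hσ (mem_setoidClass.1 hj.2.1)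
    refine ⟨.cons e hends p, ?_, fun b => ?_, ?_⟩
    · simp only [Multigraph.Walk.edges, List.nodup_cons]
      exact ⟨fun h => ((hmem e).1 h).2.not_gt hlt, hnd⟩
    · simp only [Multigraph.Walk.edges, List.mem_cons, hmem]
      constructor
      · rintro (rfl | ⟨hb, hle⟩)
        · exact ⟨he, le_rfl⟩
        · exact ⟨hb, hlt.le.trans hle⟩
      · rintro ⟨hb, hle⟩
        refine or_iff_not_imp_left.2 fun hbe => ⟨hb, ?_⟩
        have hlt' := lt_of_le_of_ne hle fun h => hbe (Fin.eq_of_val_sub_eq h).symm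
        exact (hj.val_sub_le (mem_setoidClass.2 hb) hlt').2
    · simp [Multigraph.Walk.verts, Multigraph.Walk.edges, hverts]
termination_by n - (e - i).val
decreasing_by
  have := (j - i).isLt
  omega

theorem isSimpleCycleOn_setoidClass_krewerasSetoid (hσ : NonCrossingRel σ) (i : Fin n) :
    ((cycleGraph n).quot σ).IsSimpleCycleOn (setoidClass (krewerasSetoid σ) i) := by
  obtain ⟨p, hnd, hmem, hverts⟩ := exists_walk_krewerasSetoid hσ ((krewerasSetoid σ).refl i)
  have hmem' (b : Fin n) : b ∈ p.edges ↔ krewerasSetoid σ i b := by simp [hmem]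
  refine ⟨Quotient.mk σ i, p, List.ne_nil_of_mem ((hmem' i).2 ((krewerasSetoid σ).refl i)), hnd,
    ?_, ?_⟩
  · rw [hverts, List.dropLast_concat]
    refine hnd.map_on fun x hx y hy hxy => eq_of_krewerasSetoid_of_rel ?_ (Quotient.exact hxy)
    exact (krewerasSetoid σ).trans ((krewerasSetoid σ).symm ((hmem' x).1 hx)) ((hmem' y).1 hy)
  · ext b
    simp [hmem', mem_setoidClass]

end Pads

/-- Let `C` be the cycle graph of length `n` and `π` a non-crossing
partition of its vertices, so that `C^π` is a cactus.  Then the map assigning to each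
block `B` of the Kreweras complement `K(π)` the subgraph of `C^π` with edge set `B` is a
bijection from the blocks of `K(π)` onto the pads (simple cycles) of `C^π`; explicitly,
for each edge `e_i` of a block `B` with cyclic successor `e_j` in `B`, the vertex
`v_{i+1}` is `π`-equivalent to `v_j`. -/
theorem stmt_2 (n : ℕ) [NeZero n] (σ κ : Setoid (Fin n))
    (hσ : NonCrossingRel σ.r)
    (hcactus : ((cycleGraph n).quot σ).IsCactus)
    (hκ : IsKrewerasComplement σ κ) :
    (∀ S : Finset (Fin n),
        ((cycleGraph n).quot σ).IsSimpleCycleOn S ↔ ∃ i : Fin n, S = setoidClass κ i) ∧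
    (∀ i j : Fin n, CyclicNextIn (setoidClass κ i) i j → σ.r (i + 1) j) := by
  obtain rfl := hκ.eq_krewerasSetoid hσ
  refine ⟨fun S => ⟨fun hS => ?_, ?_⟩, fun i j => rel_add_one_of_cyclicNextIn hσ⟩
  · obtain ⟨e, he⟩ := hS.nonempty
    exact ⟨e, hcactus.eq_of_mem_of_mem hS (isSimpleCycleOn_setoidClass_krewerasSetoid hσ e) he
      (mem_setoidClass.2 ((krewerasSetoid σ).refl e))⟩
  · rintro ⟨i, rfl⟩
    exact isSimpleCycleOn_setoidClass_krewerasSetoid hσ i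
end
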